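/- Every L_Pres-minimal theory has definable Skolem functions: if Th(G,L) is L_Pres-minimal (L an expansion of the Presburger language, the L_Pres-reduct of G a Z-group), then for every ∅-L-definable set X ⊆ G^{m+n} there is a ∅-L-definable function g : π_m(X) → G^n with (x, g(x)) ∈ X for all x ∈ π_m(X). -/

import Mathlib

open FirstOrder FirstOrder.Language

universe u v w

namespace Presburger

/-- Function symbols of the Presburger language: `+`, `0`, `1`. -/
inductive Func : ℕ → Type
  | add : Func 2
  | zero : Func 0
  | one : Func 0

/-- Relation symbols of the Presburger language: `≤` and congruence mod `n` for each `n > 0`. -/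
inductive Rel : ℕ → Type
  | le : Rel 2
  | mod (n : ℕ) (hn : 0 < n) : Rel 2

/-- The Presburger language `⟨+, ≤, {≡ mod n}_{n>0}, 0, 1⟩`. -/
def Lang : FirstOrder.Language := ⟨Func, Rel⟩

/-- The natural interpretation of the Presburger language on a linearly ordered abelian
group with a distinguished element `1`; congruence mod `n` means the difference is an
`n`-th multiple. -/
instance instStructure (G : Type*) [AddCommGroup G] [LinearOrder G] [One G] :
    Lang.Structure G where
  funMap {_} f v :=
    match f with
    | Func.add => v 0 + v 1
    | Func.zero => 0
    | Func.one => 1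
  RelMap {_} r v :=
    match r with
    | Rel.le => v 0 ≤ v 1
    | Rel.mod k _ => ∃ z, v 0 - v 1 = (k : ℤ) • z

/-- A `Z`-group: a structure elementarily equivalent to `ℤ` in the Presburger language. -/
def IsZGroup (G : Type*) [AddCommGroup G] [LinearOrder G] [One G] : Prop :=
  ℤ ≅[Lang] G

variable {G : Type u} [AddCommGroup G] [LinearOrder G] [One G]

/-- A structure `M` for an expansion `L'` of the Presburger language is `L_Pres`-minimal
if every `L'`-definable (with parameters) subset of `M` is already definable (with
parameters) in the Presburger language (interpreted via the reduct along `φ`). -/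
def PresMinimalOn (L' : FirstOrder.Language.{v, w}) (φ : Lang →ᴸ L') (M : Type*) [L'.Structure M] :
    Prop :=
  ∀ s : Set (Fin 1 → M), Set.Definable (Set.univ : Set M) L' s →
    @Set.Definable M Set.univ Lang (φ.reduct M) (Fin 1) s

/-! ### Auxiliary lemmas -/


lemma structure_ext {L : Language} {M : Type*} (S1 S2 : L.Structure M)
    (hf : ∀ (n) (f : L.Functions n) (v : Fin n → M), S1.funMap f v = S2.funMap f v)
    (hr : ∀ (n) (r : L.Relations n) (v : Fin n → M), S1.RelMap r v ↔ S2.RelMap r v) :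
    S1 = S2 := by
  obtain ⟨f1, r1⟩ := S1
  obtain ⟨f2, r2⟩ := S2
  congr
  · funext n f v
    exact hf n f v
  · funext n r v
    exact propext (hr n r v)

section Basic

variable {M : Type*} [AddCommGroup M] [LinearOrder M] [One M]

@[simp] lemma funMap_add (v : Fin 2 → M) :
    Structure.funMap (L := Lang) Func.add v = v 0 + v 1 := rfl

@[simp] lemma funMap_zero (v : Fin 0 → M) :
    Structure.funMap (L := Lang) Func.zero v = 0 := rfl

@[simp] lemma relMap_le (v : Fin 2 → M) :
    Structure.RelMap (L := Lang) Rel.le v ↔ v 0 ≤ v 1 := Iff.rfl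

lemma reduct_eq {L' : FirstOrder.Language.{v, w}} [L'.Structure M] (φ : Lang →ᴸ L') [φ.IsExpansionOn M] :
    φ.reduct M = instStructure M := by
  refine structure_ext _ _ (fun n f vv => ?_) (fun n r vv => ?_)
  · exact φ.map_onFunction f vv
  · exact iff_of_eq (φ.map_onRelation r vv)

end Basic

/-! ### The canonical element of a set -/

/-- `t` is the canonical element of `S`: it has minimal "absolute value" among elements
of `S` (expressed without `abs`), with ties broken in favor of the nonnegative element. -/
def IsCanon {M : Type*} [AddCommGroup M] [LinearOrder M] (S : Set M) (t : M) : Prop :=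
  t ∈ S ∧ (∀ u ∈ S, (0 ≤ t + u ∧ t ≤ u) ∨ (u ≤ t ∧ t + u ≤ 0)) ∧
    (0 ≤ t ∨ ∀ w : M, w + t = 0 → w ∉ S)

lemma zCanon (S : Set ℤ) (hS : ∃ t, t ∈ S) : ∃! t, IsCanon S t := by
  classical
  obtain ⟨t₀, ht₀⟩ := hS
  have habs : ∀ u : ℤ, u ∈ S → ((u.natAbs : ℤ) ∈ S ∨ (-(u.natAbs : ℤ)) ∈ S) := by
    intro u hu
    rcases Int.natAbs_eq u with h | h
    · left; rwa [← h]
    · right; rwa [← h]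
  have hk : ∃ k : ℕ, ((k : ℤ) ∈ S ∨ (-(k : ℤ)) ∈ S) := ⟨t₀.natAbs, habs t₀ ht₀⟩
  set k := Nat.find hk with hkdef
  have hkspec := Nat.find_spec hk
  have hmin : ∀ u ∈ S, k ≤ u.natAbs := by
    intro u hu
    by_contra hlt
    push_neg at hlt
    exact Nat.find_min hk hlt (habs u hu)
  set t : ℤ := if (k : ℤ) ∈ S then (k : ℤ) else -(k : ℤ) with htdef
  have htS : t ∈ S := by
    by_cases h : (k : ℤ) ∈ S
    · simpa [htdef, h] using h
    · rcases hkspec with h' | h'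
      · exact absurd h' h
      · simpa [htdef, h] using h'
  have htabs : t.natAbs = k := by
    by_cases h : (k : ℤ) ∈ S <;> simp [htdef, h]
  have hcanon : IsCanon S t := by
    refine ⟨htS, ?_, ?_⟩
    · intro u hu
      have h1 := hmin u hu
      omega
    · by_cases h : (k : ℤ) ∈ S
      · left
        have : t = (k : ℤ) := by simp [htdef, h]
        omega
      · right
        intro w hw hwS
        have h1 := hmin w hwS
        have h2 : t = -(k : ℤ) := by simp [htdef, h]
        have : w = (k : ℤ) := by omega
        exact h (this ▸ hwS)
  refine ⟨t, hcanon, ?_⟩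
  intro t' h'
  obtain ⟨ht'S, habs', htie'⟩ := h'
  obtain ⟨_, habs2, htie⟩ := hcanon
  have h1 := habs' t htS
  have h2 := habs2 t' ht'S
  by_cases heq : t' = t
  · exact heq
  exfalso
  have hne : t' = -t := by omega
  have hnt : -t ∈ S := hne ▸ ht'S
  have hnt' : -t' ∈ S := by rw [hne, neg_neg]; exact htS
  have h0t : 0 ≤ t := by
    rcases htie with h | h
    · exact h
    · exact absurd hnt (h (-t) (by ring))
  have h0t' : 0 ≤ t' := by
    rcases htie' with h | h
    · exact h
    · exact absurd hnt' (h (-t') (by ring))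
  omega

/-! ### Formulas expressing the canonical element -/

section Formulas

variable {L : FirstOrder.Language.{v, w}} (ψ : Lang →ᴸ L) {γ : Type*}

/-- The fiber of a formula in one extra variable over an assignment. -/
def Fib {M : Type*} [L.Structure M] (θ : L.Formula (γ ⊕ Fin 1)) (x : γ → M) : Set M :=
  {t | θ.Realize (Sum.elim x fun _ => t)}

/-- The term `0`. -/
def tZ {β : Type*} : Lang.Term β := Term.func Func.zero finZeroElim

/-- Addition of terms. -/
def tAdd {β : Type*} (a b : Lang.Term β) : Lang.Term β := Term.func Func.add ![a, b]

/-- The `≤` relation on terms. -/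
def leF {β : Type*} (a b : Lang.Term β) : Lang.Formula β :=
  Relations.formula₂ (Rel.le : Lang.Relations 2) a b

/-- The variable `t` (the distinguished extra variable). -/
def tT : Lang.Term ((γ ⊕ Fin 1) ⊕ Fin 1) := Term.var (Sum.inl (Sum.inr 0))

/-- The freshly quantified variable `u`. -/
def tU : Lang.Term ((γ ⊕ Fin 1) ⊕ Fin 1) := Term.var (Sum.inr 0)

/-- `|t| ≤ |u|`, expressed without `abs` or negation. -/
def absLEF : Lang.Formula ((γ ⊕ Fin 1) ⊕ Fin 1) :=
  ((leF tZ (tAdd tT tU)) ⊓ (leF tT tU)) ⊔ ((leF tU tT) ⊓ (leF (tAdd tT tU) tZ))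

/-- Relabeling sending the distinguished variable to a freshly quantified one. -/
def ruMap : (γ ⊕ Fin 1) → ((γ ⊕ Fin 1) ⊕ Fin 1) :=
  Sum.elim (fun a => Sum.inl (Sum.inl a)) (fun _ => Sum.inr 0)

/-- The formula expressing that the distinguished variable is the canonical element
of the fiber of `θ`. -/
noncomputable def canonF (θ : L.Formula (γ ⊕ Fin 1)) : L.Formula (γ ⊕ Fin 1) :=
  θ ⊓ (Formula.iAlls (Fin 1)
        ((θ.relabel ruMap).imp (ψ.onFormula absLEF))) ⊓
    ((ψ.onFormula (leF tZ (Term.var (Sum.inr 0)) : Lang.Formula (γ ⊕ Fin 1))) ⊔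
      Formula.iAlls (Fin 1)
        ((ψ.onFormula ((tAdd tU tT).equal tZ)).imp (θ.relabel ruMap).not))

variable {M : Type u} [AddCommGroup M] [LinearOrder M] [One M] [L.Structure M]
  [ψ.IsExpansionOn M]

@[simp] lemma realize_leF {β : Type*} (a b : Lang.Term β) (v : β → M) :
    (leF a b).Realize v ↔ a.realize v ≤ b.realize v := by
  exact (Formula.realize_rel₂ (L := Lang) (R := (Rel.le : Lang.Relations 2)))

@[simp] lemma realize_tAdd {β : Type*} (a b : Lang.Term β) (v : β → M) :
    (tAdd a b).realize v = a.realize v + b.realize v := rfl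

@[simp] lemma realize_tZ {β : Type*} (v : β → M) :
    (tZ : Lang.Term β).realize v = 0 := rfl

lemma fin1_const (i : Fin 1 → M) : i = fun _ => i 0 :=
  funext fun j => by rw [Subsingleton.elim j 0]

lemma ru_comp (v : γ ⊕ Fin 1 → M) (i : Fin 1 → M) :
    ((fun a => Sum.elim v i (id a)) ∘ (ruMap (γ := γ))) =
      Sum.elim (v ∘ Sum.inl) (fun _ : Fin 1 => i 0) := by
  funext s
  rcases s with a | j <;> rfl

lemma ru_comp' (v : γ ⊕ Fin 1 → M) (i : Fin 1 → M) :
    ((fun a => Sum.elim v i a) ∘ (ruMap (γ := γ))) =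
      Sum.elim (v ∘ Sum.inl) (fun _ : Fin 1 => i 0) := by
  funext s
  rcases s with a | j <;> rfl

lemma realize_canonF (θ : L.Formula (γ ⊕ Fin 1)) (v : γ ⊕ Fin 1 → M) :
    (canonF ψ θ).Realize v ↔ IsCanon (Fib θ (v ∘ Sum.inl)) (v (Sum.inr 0)) := by
  have hsplit : (Sum.elim (v ∘ Sum.inl) fun _ : Fin 1 => v (Sum.inr 0)) = v := by
    funext s
    rcases s with a | j
    · rfl
    · simp only [Sum.elim_inr]
      rw [Subsingleton.elim j 0]
  have hmem : ∀ t : M, t ∈ Fib θ (v ∘ Sum.inl) ↔ θ.Realize (Sum.elim (v ∘ Sum.inl) fun _ => t) :=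
    fun t => Iff.rfl
  simp only [canonF, Formula.realize_inf, Formula.realize_sup, Formula.realize_imp,
    Formula.realize_iAlls, Formula.realize_relabel, Formula.realize_not,
    LHom.realize_onFormula, IsCanon]
  constructor
  · rintro ⟨⟨hθ, hall⟩, htie⟩
    refine ⟨by rw [hmem, hsplit]; exact hθ, ?_, ?_⟩
    · intro u hu
      have := hall (fun _ => u)
      rw [ru_comp'] at this
      have h2 := this (by rw [hmem] at hu; exact hu)
      simpa [absLEF, tT, tU, Formula.realize_rel₂, Term.realize_func,
        Matrix.cons_val_zero, Matrix.cons_val_one, Matrix.head_cons] using h2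
    · rcases htie with h | h
      · left
        simpa using h
      · right
        intro w hw hwS
        have := h (fun _ => w)
        rw [ru_comp'] at this
        refine (this ?_) (by rw [hmem] at hwS; exact hwS)
        simpa [tT, tU] using hw
  · rintro ⟨hθ, hall, htie⟩
    refine ⟨⟨by rw [hmem, hsplit] at hθ; exact hθ, ?_⟩, ?_⟩
    · intro i
      rw [ru_comp']
      intro hi
      have := hall (i 0) (by rw [hmem]; exact hi)
      simpa [absLEF, tT, tU, Formula.realize_rel₂, Term.realize_func,
        Matrix.cons_val_zero, Matrix.cons_val_one, Matrix.head_cons] using this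
    · rcases htie with h | h
      · left
        simpa using h
      · right
        intro i
        rw [ru_comp']
        intro hw hi
        refine h (i 0) ?_ hi
        simpa [tT, tU] using hw

/-- "The fiber is nonempty". -/
noncomputable def exF (θ : L.Formula (γ ⊕ Fin 1)) : L.Formula γ :=
  Formula.iExs (Fin 1) θ

lemma realize_exF (θ : L.Formula (γ ⊕ Fin 1)) (x : γ → M) :
    (exF θ).Realize x ↔ ∃ t, t ∈ Fib θ x := by
  simp only [exF, Formula.realize_iExs, id_eq]
  constructor
  · rintro ⟨i, hi⟩
    refine ⟨i 0, ?_⟩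
    have : (fun a => Sum.elim x i a) = Sum.elim x (fun _ => i 0) := by
      funext s
      rcases s with a | j
      · rfl
      · simp only [Sum.elim_inr]
        rw [Subsingleton.elim j 0]
    rw [show (Fib θ x) = {t | θ.Realize (Sum.elim x fun _ => t)} from rfl]
    exact Set.mem_setOf_eq ▸ (this ▸ hi)
  · rintro ⟨t, ht⟩
    exact ⟨fun _ => t, by
      have : (fun a => Sum.elim x (fun _ : Fin 1 => t) a) = Sum.elim x (fun _ => t) := rfl
      exact this ▸ ht⟩

/-- "There is a unique canonical element of the fiber". -/
noncomputable def euF (θ : L.Formula (γ ⊕ Fin 1)) : L.Formula γ :=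
  Formula.iExs (Fin 1)
    ((canonF ψ θ) ⊓ Formula.iAlls (Fin 1)
      (((canonF ψ θ).relabel ruMap).imp
        ((Term.var (Sum.inr 0) : L.Term ((γ ⊕ Fin 1) ⊕ Fin 1)).equal
          (Term.var (Sum.inl (Sum.inr 0))))))

lemma realize_euF (θ : L.Formula (γ ⊕ Fin 1)) (x : γ → M) :
    (euF ψ θ).Realize x ↔ ∃! t, IsCanon (Fib θ x) t := by
  simp only [euF, Formula.realize_iExs, Formula.realize_inf, Formula.realize_iAlls,
    Formula.realize_imp, Formula.realize_relabel, Formula.realize_equal, id_eq]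
  constructor
  · rintro ⟨i, hc, huniq⟩
    refine ⟨i 0, ?_, ?_⟩
    · have := realize_canonF ψ θ (Sum.elim x i)
      rw [this] at hc
      have h1 : (Sum.elim x i) ∘ Sum.inl = x := by funext a; rfl
      have h2 : Sum.elim x i (Sum.inr 0) = i 0 := rfl
      rwa [h1, h2] at hc
    · intro t' ht'
      have := huniq (fun _ => t')
      rw [ru_comp'] at this
      have hcan : (canonF ψ θ).Realize (Sum.elim (Sum.elim x i ∘ Sum.inl) fun _ : Fin 1 => t') := by
        rw [realize_canonF]
        have h1 : (Sum.elim ((Sum.elim x i) ∘ Sum.inl) fun _ : Fin 1 => t') ∘ Sum.inl = x := by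
          funext a; rfl
        rw [h1]
        exact ht'
      simpa using this hcan
  · rintro ⟨t, ht, huniq⟩
    refine ⟨fun _ => t, ?_, ?_⟩
    · rw [realize_canonF]
      have h1 : (Sum.elim x (fun _ : Fin 1 => t)) ∘ Sum.inl = x := by funext a; rfl
      rw [h1]
      exact ht
    · intro i'
      rw [ru_comp']
      intro hc
      rw [realize_canonF] at hc
      have h1 : (Sum.elim (Sum.elim x (fun _ : Fin 1 => t) ∘ Sum.inl) fun _ : Fin 1 => i' 0) ∘
          Sum.inl = x := by funext a; rfl
      rw [h1] at hc
      have := huniq (i' 0) hc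
      simpa using this

/-- The transfer sentence: every nonempty fiber of `χ` has a unique canonical element. -/
noncomputable def sentF {k : ℕ} (χ : Lang.Formula (Fin k ⊕ Fin 1)) : Lang.Sentence :=
  Formula.iAlls (Fin k)
    (((exF χ).imp (euF (LHom.id Lang) χ)).relabel (Sum.inr : Fin k → Empty ⊕ Fin k))

lemma realize_sentF {k : ℕ} (χ : Lang.Formula (Fin k ⊕ Fin 1)) (M₀ : Type*) [AddCommGroup M₀]
    [LinearOrder M₀] [One M₀] :
    (M₀ ⊨ sentF χ) ↔
      ∀ ys : Fin k → M₀, (∃ t, t ∈ Fib χ ys) → ∃! t, IsCanon (Fib χ ys) t := by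
  have : (M₀ ⊨ sentF χ) ↔ ∀ ys : Fin k → M₀,
      ((exF χ).imp (euF (LHom.id Lang) χ)).Realize (fun a => Sum.elim (default : Empty → M₀) ys (Sum.inr a)) := by
    rw [Sentence.Realize, sentF, Formula.realize_iAlls]
    simp only [Formula.realize_relabel]
    rfl
  rw [this]
  refine forall_congr' fun ys => ?_
  have hys : (fun a => Sum.elim (default : Empty → M₀) ys (Sum.inr a)) = ys := rfl
  rw [hys, Formula.realize_imp, realize_exF, realize_euF]

lemma zsent {k : ℕ} (χ : Lang.Formula (Fin k ⊕ Fin 1)) : (ℤ ⊨ sentF χ) := by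
  rw [realize_sentF]
  intro ys hne
  exact zCanon _ hne

end Formulas


section Engine


variable {L' : FirstOrder.Language.{v, w}} [L'.Structure G] (φ : Lang →ᴸ L') [φ.IsExpansionOn G]

lemma engine (hG : IsZGroup G) (hminG : PresMinimalOn L' φ G) {α : Type}
    (θ : L'.Formula (α ⊕ Fin 1)) (x : α → G)
    (hne : ∃ t, t ∈ Fib θ x) : ∃! t, IsCanon (Fib θ x) t := by
  classical
  set S1 : Set (Fin 1 → G) := {f | θ.Realize (Sum.elim x fun _ => f 0)} with hS1
  have hdef : Set.Definable (Set.univ : Set G) L' S1 := by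
    rw [Set.definable_iff_exists_formula_sum]
    refine ⟨θ.relabel (Sum.map (fun a => (⟨x a, trivial⟩ : (Set.univ : Set G))) id), ?_⟩
    ext f
    rw [Set.mem_setOf_eq, Set.mem_setOf_eq, Formula.realize_relabel]
    have heq : (Sum.elim (Subtype.val : ↥(Set.univ : Set G) → G) f) ∘
        (Sum.map (fun a => (⟨x a, trivial⟩ : (Set.univ : Set G))) id) =
        Sum.elim x (fun _ => f 0) := by
      funext s
      rcases s with a | j
      · rfl
      · show f j = f 0
        rw [Subsingleton.elim j 0]
    rw [heq]
  have hdefP := hminG S1 hdef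
  rw [reduct_eq φ] at hdefP
  obtain ⟨A0, -, hA0def⟩ := (Set.definable_iff_finitely_definable).mp hdefP
  rw [Set.definable_iff_exists_formula_sum] at hA0def
  obtain ⟨χ, hχ⟩ := hA0def
  haveI : Fintype ↥(A0 : Set G) := FinsetCoe.fintype A0
  set k := Fintype.card ↥(A0 : Set G) with hk
  let e : ↥(A0 : Set G) ≃ Fin k := Fintype.equivFin _
  set χ' : Lang.Formula (Fin k ⊕ Fin 1) := χ.relabel (Sum.map e id) with hχ'
  set ys : Fin k → G := fun i => ((e.symm i : ↥(A0 : Set G)) : G) with hys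
  have hfibset : Fib θ x = Fib (L := Lang) χ' ys := by
    ext t
    have h1 : t ∈ Fib θ x ↔ (fun _ : Fin 1 => t) ∈ S1 := Iff.rfl
    rw [h1, hχ, Set.mem_setOf_eq]
    show χ.Realize _ ↔ χ'.Realize _
    rw [hχ', Formula.realize_relabel]
    have heq : (Sum.elim ys (fun _ : Fin 1 => t)) ∘ (Sum.map e id) =
        Sum.elim (Subtype.val : ↥(A0 : Set G) → G) (fun _ : Fin 1 => t) := by
      funext s
      rcases s with a | j
      · show ys (e a) = (a : G)
        rw [hys]
        simp
      · rfl
    rw [heq]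
  have hsent : G ⊨ sentF χ' := (hG.realize_sentence (sentF χ')).mp (zsent χ')
  rw [realize_sentF] at hsent
  rw [hfibset] at hne ⊢
  exact hsent ys hne

lemma build (hG : IsZGroup G) (hminG : PresMinimalOn L' φ G) :
    ∀ (n : ℕ) (α : Type) (θ : L'.Formula (α ⊕ Fin n)),
      ∃ g : (α → G) → (Fin n → G),
        (∃ ξ : L'.Formula (α ⊕ Fin n), ∀ v : α ⊕ Fin n → G,
          ξ.Realize v ↔ ((∃ y : Fin n → G, θ.Realize (Sum.elim (v ∘ Sum.inl) y)) ∧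
            v ∘ Sum.inr = g (v ∘ Sum.inl))) ∧
        ∀ x : α → G, (∃ y, θ.Realize (Sum.elim x y)) → θ.Realize (Sum.elim x (g x)) := by
  intro n
  induction n with
  | zero =>
    intro α θ
    refine ⟨fun _ => finZeroElim, ⟨θ, ?_⟩, ?_⟩
    · intro v
      have hel : ∀ y : Fin 0 → G, Sum.elim (v ∘ Sum.inl) y = v := by
        intro y
        funext s
        rcases s with a | j
        · rfl
        · exact j.elim0
      constructor
      · intro hv
        exact ⟨⟨finZeroElim, by rw [hel]; exact hv⟩, funext fun j => j.elim0⟩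
      · rintro ⟨⟨y, hy⟩, -⟩
        rwa [hel] at hy
    · rintro x ⟨y, hy⟩
      have hel : Sum.elim x (finZeroElim : Fin 0 → G) = Sum.elim x y := by
        funext s
        rcases s with a | j
        · rfl
        · exact j.elim0
      rw [hel]; exact hy
  | succ n ih =>
    intro α θ
    classical
    set r : α ⊕ Fin (n+1) → (α ⊕ Fin 1) ⊕ Fin n :=
      Sum.elim (fun a => Sum.inl (Sum.inl a))
        (fun j => Fin.cases (Sum.inl (Sum.inr 0)) (fun j' => Sum.inr j') j) with hr
    set θ₁ : L'.Formula ((α ⊕ Fin 1) ⊕ Fin n) := θ.relabel r with hθ₁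
    have hθ₁r : ∀ (x : α → G) (t : G) (rest : Fin n → G),
        θ₁.Realize (Sum.elim (Sum.elim x fun _ => t) rest) ↔
          θ.Realize (Sum.elim x (Fin.cons t rest)) := by
      intro x t rest
      rw [hθ₁, Formula.realize_relabel]
      have heq : (Sum.elim (Sum.elim x fun _ => t) rest) ∘ r = Sum.elim x (Fin.cons t rest) := by
        funext s
        rcases s with a | j
        · rfl
        · refine Fin.cases ?_ (fun j' => ?_) j
          · show Sum.elim _ rest (r (Sum.inr 0)) = _
            rw [hr]
            simp [Fin.cases_zero]
          · show Sum.elim _ rest (r (Sum.inr j'.succ)) = _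
            rw [hr]
            simp [Fin.cases_succ]
      rw [heq]
    obtain ⟨g₁, ⟨ξ₁, hξ₁⟩, hg₁⟩ := ih (α ⊕ Fin 1) θ₁
    set θY : L'.Formula (α ⊕ Fin 1) :=
      Formula.iExs (Fin n) θ₁ with hθY
    have hθYr : ∀ (x : α → G) (t : G),
        t ∈ Fib θY x ↔ ∃ rest, θ.Realize (Sum.elim x (Fin.cons t rest)) := by
      intro x t
      show θY.Realize _ ↔ _
      rw [hθY, Formula.realize_iExs]
      refine exists_congr fun rest => ?_
      have heq : (fun a => Sum.elim (Sum.elim x fun _ : Fin 1 => t) rest (id a)) =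
          Sum.elim (Sum.elim x fun _ : Fin 1 => t) rest := rfl
      rw [hθ₁r x t rest]
    have hcanon : ∀ x : α → G, (∃ t, t ∈ Fib θY x) → ∃! t, IsCanon (Fib θY x) t :=
      fun x hx => engine φ hG hminG θY x hx
    set h : (α → G) → G := fun x =>
      if hx : ∃ t, t ∈ Fib θY x then (hcanon x hx).choose else 0 with hh
    have hIsC : ∀ (x : α → G), (∃ t, t ∈ Fib θY x) → IsCanon (Fib θY x) (h x) := by
      intro x hx
      rw [hh]
      simp only [dif_pos hx]
      exact (hcanon x hx).choose_spec.1
    have hU : ∀ (x : α → G), (∃ t, t ∈ Fib θY x) →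
        ∀ t, IsCanon (Fib θY x) t → t = h x := by
      intro x hx t ht
      rw [hh]
      simp only [dif_pos hx]
      exact (hcanon x hx).choose_spec.2 t ht
    have hfibY_ne : ∀ x : α → G,
        (∃ y' : Fin (n+1) → G, θ.Realize (Sum.elim x y')) ↔ (∃ t, t ∈ Fib θY x) := by
      intro x
      constructor
      · rintro ⟨y', hy'⟩
        refine ⟨y' 0, (hθYr x (y' 0)).mpr ⟨Fin.tail y', ?_⟩⟩
        rw [Fin.cons_self_tail]
        exact hy'
      · rintro ⟨t, ht⟩
        obtain ⟨rest, hrest⟩ := (hθYr x t).mp ht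
        exact ⟨Fin.cons t rest, hrest⟩
    set pr : α ⊕ Fin 1 → α ⊕ Fin (n+1) :=
      Sum.map id (fun _ => (0 : Fin (n+1))) with hpr
    set r' : (α ⊕ Fin 1) ⊕ Fin n → α ⊕ Fin (n+1) :=
      Sum.elim (Sum.elim Sum.inl (fun _ => Sum.inr 0)) (fun j => Sum.inr j.succ) with hr'
    set g : (α → G) → Fin (n+1) → G :=
      fun x => Fin.cons (h x) (g₁ (Sum.elim x fun _ => h x)) with hg
    refine ⟨g, ⟨((canonF φ θY).relabel pr) ⊓ (ξ₁.relabel r'), ?_⟩, ?_⟩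
    · intro v
      rw [Formula.realize_inf, Formula.realize_relabel, Formula.realize_relabel,
        realize_canonF, hξ₁]
      have e1 : (v ∘ pr) ∘ Sum.inl = v ∘ Sum.inl := rfl
      have e2 : (v ∘ pr) (Sum.inr 0) = v (Sum.inr 0) := rfl
      have e3 : (v ∘ r') ∘ Sum.inl = Sum.elim (v ∘ Sum.inl) (fun _ : Fin 1 => v (Sum.inr 0)) := by
        funext s; rcases s with a | j <;> rfl
      have e4 : (v ∘ r') ∘ Sum.inr = (v ∘ Sum.inr) ∘ Fin.succ := rfl
      rw [e1, e2, e3, e4]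
      constructor
      · rintro ⟨hcan, hys, hgeq⟩
        have hx : ∃ t, t ∈ Fib θY (v ∘ Sum.inl) := ⟨v (Sum.inr 0), hcan.1⟩
        have hy0 : v (Sum.inr 0) = h (v ∘ Sum.inl) := hU _ hx _ hcan
        refine ⟨(hfibY_ne _).mpr hx, ?_⟩
        have hcons : v ∘ Sum.inr =
            Fin.cons (v (Sum.inr 0)) ((v ∘ Sum.inr) ∘ Fin.succ) :=
          (Fin.cons_self_tail (v ∘ Sum.inr)).symm
        rw [hcons, hgeq, hy0, hg]
      · rintro ⟨⟨y', hy'⟩, hyg⟩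
        have hx : ∃ t, t ∈ Fib θY (v ∘ Sum.inl) := (hfibY_ne _).mp ⟨y', hy'⟩
        have hy0 : v (Sum.inr 0) = h (v ∘ Sum.inl) := by
          have := congrFun hyg 0
          rw [hg] at this
          simpa [Fin.cons_zero] using this
        refine ⟨?_, ?_, ?_⟩
        · rw [hy0]
          exact hIsC _ hx
        · obtain ⟨rest, hrest⟩ := (hθYr _ (h (v ∘ Sum.inl))).mp (hIsC _ hx).1
          exact ⟨rest, by rw [hy0]; exact (hθ₁r _ _ rest).mpr hrest⟩
        · have : (v ∘ Sum.inr) ∘ Fin.succ = (g (v ∘ Sum.inl)) ∘ Fin.succ := by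
            rw [hyg]
          rw [this, hy0, hg]
          funext j
          simp [Fin.cons_succ]
    · rintro x ⟨y, hy⟩
      have hx : ∃ t, t ∈ Fib θY x := (hfibY_ne x).mp ⟨y, hy⟩
      obtain ⟨rest, hrest⟩ := (hθYr x (h x)).mp (hIsC x hx).1
      have hx' : ∃ ys, θ₁.Realize (Sum.elim (Sum.elim x fun _ => h x) ys) :=
        ⟨rest, (hθ₁r x (h x) rest).mpr hrest⟩
      have hcon := hg₁ (Sum.elim x fun _ => h x) hx'
      rw [hθ₁r] at hcon
      rw [hg]
      exact hcon

end Engine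

/-- Every `L_Pres`-minimal theory has definable Skolem functions: if every model of
`Th(G, L')` is `L_Pres`-minimal, then for every `∅`-definable set `X ⊆ G^{m+n}` there is a
`∅`-definable function `g : π_m(X) → G^n` whose graph lies in `X`. -/
theorem presMinimal_skolem (hG : IsZGroup G)
    (L' : FirstOrder.Language.{v, w}) [L'.Structure G] (φ : Lang →ᴸ L') [φ.IsExpansionOn G]
    (hmin : ∀ (M : Type u) [L'.Structure M], (G ≅[L'] M) → PresMinimalOn L' φ M)
    (m n : ℕ) (X : Set (Fin m ⊕ Fin n → G))
    (hX : Set.Definable (∅ : Set G) L' X) :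
    ∃ g : (Fin m → G) → (Fin n → G),
      Set.Definable (∅ : Set G) L'
        {z : Fin m ⊕ Fin n → G |
          (∃ y : Fin n → G, Sum.elim (z ∘ Sum.inl) y ∈ X) ∧
          z ∘ Sum.inr = g (z ∘ Sum.inl)} ∧
      ∀ x : Fin m → G, (∃ y : Fin n → G, Sum.elim x y ∈ X) → Sum.elim x (g x) ∈ X := by
  have hminG : PresMinimalOn L' φ G := hmin G rfl
  rw [Set.empty_definable_iff] at hX
  obtain ⟨θX, hθX⟩ := hX
  subst hθX
  obtain ⟨g, ⟨ξ, hξ⟩, hprop⟩ := build φ hG hminG n (Fin m) θX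
  refine ⟨g, ?_, ?_⟩
  · rw [Set.empty_definable_iff]
    exact ⟨ξ, Set.ext fun z => (hξ z).symm⟩
  · intro x hx
    exact hprop x hx

end Presburger
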